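/- Corollary 1 (running averages converge): under Assumption 1, for every initial vector x(0) ∈ ℝ^n and each agent i, the running time average y_i(k) = (1/(k+1)) Σ_{t=0}^{k} x_i(t) (equivalently, y_i(0) = x_i(0) and y_i(k) = (k/(k+1)) y_i(k−1) + (1/(k+1)) x_i(k)) converges as k → ∞ to a limit y_i* satisfying |y_i* − x_ave| ≤ 1. -/

import Mathlib

open Finset Filter

/-- Assumption 1 on the weight matrix `W` relative to the graph `G`:
symmetric, nonnegative, rows sum to 1, diagonally dominant (`w_ii > 1/2`),
respects the communication graph, and rational weights in `(0,1)` on edges. -/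
def Assumption1 {n : ℕ} (G : SimpleGraph (Fin n)) (W : Matrix (Fin n) (Fin n) ℝ) : Prop :=
  (∀ i j, W i j = W j i) ∧
  (∀ i j, 0 ≤ W i j) ∧
  (∀ i, ∑ j, W i j = 1) ∧
  (∀ i, 1 / 2 < W i i) ∧
  (∀ i j, i ≠ j → ¬G.Adj i j → W i j = 0) ∧
  (∀ i j, G.Adj i j → (∃ q : ℚ, (q : ℝ) = W i j) ∧ 0 < W i j ∧ W i j < 1)

/-- The quantized system `x(k+1) = W ⌊x(k)⌋ + x(k) − ⌊x(k)⌋`, componentwise. -/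
def Traj {n : ℕ} (W : Matrix (Fin n) (Fin n) ℝ) (x : ℕ → Fin n → ℝ) : Prop :=
  ∀ k i, x (k + 1) i = (∑ j, W i j * (⌊x k j⌋ : ℝ)) + x k i - (⌊x k i⌋ : ℝ)

/-- `m(k) = min_i ⌊x_i(k)⌋`. -/
noncomputable def mfun {n : ℕ} (hn : 0 < n) (x : ℕ → Fin n → ℝ) (k : ℕ) : ℤ :=
  Finset.univ.inf' ⟨⟨0, hn⟩, Finset.mem_univ _⟩ fun i => ⌊x k i⌋

/-- `M(k) = max_i ⌊x_i(k)⌋`. -/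
noncomputable def Mfun {n : ℕ} (hn : 0 < n) (x : ℕ → Fin n → ℝ) (k : ℕ) : ℤ :=
  Finset.univ.sup' ⟨⟨0, hn⟩, Finset.mem_univ _⟩ fun i => ⌊x k i⌋

/-- The γ gap conditions (fractional part `c_i(k) = x_i(k) − ⌊x_i(k)⌋`). -/
def GammaSetup {n : ℕ} (W : Matrix (Fin n) (Fin n) ℝ) (x : ℕ → Fin n → ℝ) (γ : ℝ) : Prop :=
  0 < γ ∧
  ∀ i k,
    (x k i - (⌊x k i⌋ : ℝ) > 1 - W i i → x k i - (⌊x k i⌋ : ℝ) - (1 - W i i) ≥ 2 * γ) ∧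
    (1 - (x k i - (⌊x k i⌋ : ℝ)) > 1 - W i i →
      1 - (x k i - (⌊x k i⌋ : ℝ)) - (1 - W i i) ≥ 2 * γ) ∧
    1 - (x k i - (⌊x k i⌋ : ℝ)) ≥ 2 * γ ∧
    1 / 2 - (1 - W i i) ≥ 2 * γ

/-- `α_i = 1 − w_ii + γ`. -/
noncomputable def alpha {n : ℕ} (W : Matrix (Fin n) (Fin n) ℝ) (γ : ℝ) (i : Fin n) : ℝ :=
  1 - W i i + γ

/-- The Lyapunov function `V(k) = Σ_i max{|x_i(k) − m(k) − 1| − α_i, 0}`. -/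
noncomputable def Vfun {n : ℕ} (hn : 0 < n) (W : Matrix (Fin n) (Fin n) ℝ) (γ : ℝ)
    (x : ℕ → Fin n → ℝ) (k : ℕ) : ℝ :=
  ∑ i, max (|x k i - (mfun hn x k : ℝ) - 1| - alpha W γ i) 0

/-- `δ = min_{(p,q) ∈ E} w_pq`. -/
noncomputable def deltaMin {n : ℕ} (G : SimpleGraph (Fin n)) (W : Matrix (Fin n) (Fin n) ℝ) : ℝ :=
  sInf {r : ℝ | ∃ p q, G.Adj p q ∧ r = W p q}

open Classical in
/-- `T_s(k0,k)`: number of times `t ∈ [k0,k]` at which node `s` lies in `X1 ∪ X2`,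
i.e. `x_s(t) < m(t) + 1`. -/
noncomputable def Tcount {n : ℕ} (hn : 0 < n) (x : ℕ → Fin n → ℝ) (s : Fin n)
    (k0 k : ℕ) : ℕ :=
  ((Finset.Icc k0 k).filter fun t => x t s < (mfun hn x t : ℝ) + 1).card

open Topology Matrix

/-!
The off-diagonal weights have a common denominator `D`, so `x_i(k)` stays in `x_i(0) + D⁻¹ℤ`;
as `W` is stochastic the trajectory also stays in a bounded box. A deterministic orbit in a finite
set is eventually periodic, so the running averages converge to the means `y_i` over one period.
Over a period the increments telescope to zero, so the period sums of the floors form a fixed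
vector of `W`; by the maximum principle on the connected graph they are constant, which puts every
`y_i` in one interval `[c, c + 1)`. Since `W` is doubly stochastic, `Σ_i x_i(k)` is conserved, so
`x_ave` is the mean of the `y_i` and lies in the same interval.
-/

section EventuallyPeriodic

variable {α : Type*} {K p : ℕ}

theorem finite_range_of_eventually_periodic {u : ℕ → α} (hp : 0 < p)
    (hper : ∀ k ≥ K, u (k + p) = u k) : (Set.range u).Finite := by
  refine ((range (K + p)).finite_toSet.image u).subset ?_
  rintro _ ⟨k, rfl⟩
  induction k using Nat.strong_induction_on with
  | _ k ih =>
    by_cases hk : k < K + p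
    · exact ⟨k, by simpa using hk, rfl⟩
    · obtain ⟨m, rfl⟩ : ∃ m, k = m + p := ⟨k - p, by omega⟩
      rw [hper m (by omega)]
      exact ih m (by omega)

theorem exists_eventually_periodic_of_finite_range {u : ℕ → α} {f : α → α}
    (hu : ∀ k, u (k + 1) = f (u k)) (hfin : (Set.range u).Finite) :
    ∃ K p, 0 < p ∧ ∀ k ≥ K, u (k + p) = u k := by
  have : Finite (Set.range u) := hfin.to_subtype
  obtain ⟨a, b, hab, heq⟩ := Finite.exists_ne_map_eq_of_infinite (Set.rangeFactorization u)
  wlog hlt : a < b generalizing a b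
  · exact this b a hab.symm heq.symm (by omega)
  have hshift : ∀ m, u (a + m) = u (b + m) := by
    intro m
    induction m with
    | zero => exact congrArg Subtype.val heq
    | succ m ih => rw [← add_assoc, ← add_assoc, hu, hu, ih]
  refine ⟨a, b - a, by omega, fun k hk => ?_⟩
  have := hshift (k - a)
  rwa [Nat.add_sub_cancel' hk, show b + (k - a) = k + (b - a) by omega, eq_comm] at this

theorem tendsto_cesaro_of_eventually_periodic {u : ℕ → ℝ} (hp : 0 < p)
    (hper : ∀ k ≥ K, u (k + p) = u k) :
    Tendsto (fun k : ℕ => (k : ℝ)⁻¹ * ∑ t ∈ range k, u t) atTop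
      (𝓝 ((p : ℝ)⁻¹ * ∑ r ∈ range p, u (K + r))) := by
  set μ := (p : ℝ)⁻¹ * ∑ r ∈ range p, u (K + r)
  have hwindow : ∀ k ≥ K, ∑ r ∈ range p, u (k + r) = p * μ := by
    intro k hk
    induction k, hk using Nat.le_induction with
    | base => exact (mul_inv_cancel_left₀ (Nat.cast_ne_zero.mpr hp.ne') _).symm
    | succ k hk ih =>
      have h := sum_range_succ (fun r => u (k + r)) p
      rw [sum_range_succ', hper k hk] at h
      simp only [add_zero, ← add_assoc, add_right_comm k _ 1] at h
      linarith
  set g : ℕ → ℝ := fun k => ∑ t ∈ range k, u t - k * μ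
  have hg : ∀ k ≥ K, g (k + p) = g k := by
    intro k hk
    simp only [g, sum_range_add, hwindow k hk]
    push_cast
    ring
  obtain ⟨C, hC⟩ := ((finite_range_of_eventually_periodic hp hg).image abs).bddAbove
  have hbound (k : ℕ) : |g k| ≤ C := hC ⟨g k, Set.mem_range_self k, rfl⟩
  have hsmall : Tendsto (fun k : ℕ => (k : ℝ)⁻¹ * g k) atTop (𝓝 0) := by
    refine squeeze_zero_norm (fun k => ?_) (tendsto_const_div_atTop_nhds_zero_nat C)
    rw [norm_mul, norm_inv, Real.norm_natCast, Real.norm_eq_abs, inv_mul_eq_div]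
    gcongr
    exact hbound k
  refine (zero_add μ ▸ hsmall.add_const μ).congr' ?_
  filter_upwards [eventually_ne_atTop 0] with k hk
  simp only [g]
  field_simp
  ring

end EventuallyPeriodic

theorem exists_pos_nat_mul_mem_bot {ι : Type*} (s : Finset ι) (q : ι → ℝ)
    (hq : ∀ i ∈ s, ∃ r : ℚ, (r : ℝ) = q i) :
    ∃ D : ℕ, 0 < D ∧ ∀ i ∈ s, (D : ℝ) * q i ∈ (⊥ : Subring ℝ) := by
  induction s using Finset.cons_induction with
  | empty => exact ⟨1, one_pos, by simp⟩
  | cons a s ha ih =>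
    obtain ⟨D, hD, hDs⟩ := ih fun i hi => hq i (mem_cons_of_mem hi)
    obtain ⟨r, hr⟩ := hq a (mem_cons_self a s)
    refine ⟨D * r.den, Nat.mul_pos hD r.den_pos, ?_⟩
    simp only [mem_cons, forall_eq_or_imp]
    constructor
    · rw [Subring.mem_bot]
      refine ⟨D * r.num, ?_⟩
      rw [← hr, Nat.cast_mul, mul_assoc, ← Rat.cast_natCast r.den, ← Rat.cast_mul,
        Rat.den_mul_eq_num]
      push_cast
      ring
    · intro i hi
      rw [Nat.cast_mul, mul_right_comm]
      exact Subring.mul_mem _ (hDs i hi) (natCast_mem _ _)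

theorem finite_setOf_mem_Icc_mul_sub_mem_bot {D : ℝ} (hD : 0 < D) (a b c : ℝ) :
    {t : ℝ | t ∈ Set.Icc a b ∧ D * (t - c) ∈ (⊥ : Subring ℝ)}.Finite := by
  refine Set.Finite.of_finite_image (f := fun t => ⌊D * (t - c)⌋)
    ((Set.finite_Icc ⌊D * (a - c)⌋ ⌊D * (b - c)⌋).subset ?_) ?_
  · rintro _ ⟨t, ⟨⟨hat, htb⟩, -⟩, rfl⟩
    exact ⟨Int.floor_mono (by gcongr), Int.floor_mono (by gcongr)⟩
  · have hfloor : ∀ t ∈ {t : ℝ | t ∈ Set.Icc a b ∧ D * (t - c) ∈ (⊥ : Subring ℝ)},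
        (⌊D * (t - c)⌋ : ℝ) = D * (t - c) := by
      rintro t ⟨-, ht⟩
      obtain ⟨z, hz⟩ := Subring.mem_bot.mp ht
      rw [← hz, Int.floor_intCast]
    intro t ht t' ht' h
    have := (hfloor t ht).symm.trans ((congrArg Int.cast h).trans (hfloor t' ht'))
    simpa [hD.ne'] using this

theorem mean_mem_Ico_mean_floor {ι : Type*} {s : Finset ι} (hs : s.Nonempty) (a : ι → ℝ) :
    (#s : ℝ)⁻¹ * ∑ i ∈ s, a i ∈
      Set.Ico ((#s : ℝ)⁻¹ * ∑ i ∈ s, (⌊a i⌋ : ℝ)) ((#s : ℝ)⁻¹ * ∑ i ∈ s, (⌊a i⌋ : ℝ) + 1) := by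
  have hcard : (0 : ℝ) < #s := by exact_mod_cast hs.card_pos
  have hupper : ∑ i ∈ s, a i < ∑ i ∈ s, ((⌊a i⌋ : ℝ) + 1) :=
    sum_lt_sum_of_nonempty hs fun i _ => Int.lt_floor_add_one (a i)
  rw [sum_add_distrib, sum_const, nsmul_one] at hupper
  refine ⟨by gcongr with i; exact Int.floor_le (a i), ?_⟩
  rw [inv_mul_lt_iff₀ hcard, mul_add, mul_inv_cancel_left₀ hcard.ne', mul_one]
  exact hupper

theorem abs_sub_mean_lt_one {ι : Type*} [Fintype ι] {y : ι → ℝ} {c : ℝ}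
    (hy : ∀ j, y j ∈ Set.Ico c (c + 1)) (i : ι) :
    |y i - (Fintype.card ι : ℝ)⁻¹ * ∑ j, y j| < 1 := by
  have hcard : (0 : ℝ) < Fintype.card ι := by exact_mod_cast Fintype.card_pos_iff.mpr ⟨i⟩
  have hlower : c ≤ (Fintype.card ι : ℝ)⁻¹ * ∑ j, y j := by
    rw [le_inv_mul_iff₀ hcard, ← nsmul_eq_mul, ← card_univ, ← sum_const]
    exact sum_le_sum fun j _ => (hy j).1
  have hupper : (Fintype.card ι : ℝ)⁻¹ * ∑ j, y j < c + 1 := by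
    rw [inv_mul_lt_iff₀ hcard, ← nsmul_eq_mul, ← card_univ, ← sum_const]
    exact sum_lt_sum_of_nonempty ⟨i, mem_univ i⟩ fun j _ => (hy j).2
  obtain ⟨hci, hic⟩ := hy i
  rw [abs_sub_lt_iff]
  constructor <;> linarith

theorem eq_of_mulVec_eq_self_of_connected {ι : Type*} [Fintype ι] {G : SimpleGraph ι}
    (hG : G.Connected) {W : Matrix ι ι ℝ} (hnn : ∀ i j, 0 ≤ W i j)
    (hrow : ∀ i, ∑ j, W i j = 1) (hadj : ∀ i j, G.Adj i j → 0 < W i j) {F : ι → ℝ}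
    (hF : W *ᵥ F = F) (i j : ι) : F i = F j := by
  obtain ⟨m, -, hm⟩ := exists_max_image univ F (univ_nonempty_iff.mpr ⟨i⟩)
  -- At a maximum of `F`, the average `(W *ᵥ F) a = F a` forces every neighbour to be maximal.
  have hmax_adj : ∀ a b, G.Adj a b → F a = F m → F b = F m := by
    intro a b hab ha
    have hzero : ∑ j, W a j * (F m - F j) = 0 := by
      have := congrFun hF a
      simp only [Matrix.mulVec, dotProduct] at this
      simp only [mul_sub, sum_sub_distrib, ← sum_mul, hrow, one_mul, this, ha, sub_self]
    have hterm := (sum_eq_zero_iff_of_nonneg fun j _ =>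
      mul_nonneg (hnn a j) (sub_nonneg.mpr (hm j (mem_univ j)))).mp hzero b (mem_univ b)
    linarith [(mul_eq_zero.mp hterm).resolve_left (hadj a b hab).ne']
  have hmax : ∀ a, F a = F m := by
    have hwalk : ∀ u a, G.Walk u a → F u = F m → F a = F m := by
      intro u a w
      induction w with
      | nil => exact id
      | cons hA _ ih => exact fun hu => ih (hmax_adj _ _ hA hu)
    exact fun a => hwalk m a (hG.preconnected m a).some rfl
  rw [hmax i, hmax j]

theorem Assumption1.exists_rat_eq_of_ne {n : ℕ} {G : SimpleGraph (Fin n)}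
    {W : Matrix (Fin n) (Fin n) ℝ} (hW : Assumption1 G W) {i j : Fin n} (hij : i ≠ j) :
    ∃ r : ℚ, (r : ℝ) = W i j := by
  by_cases hadj : G.Adj i j
  · exact (hW.2.2.2.2.2 i j hadj).1
  · exact ⟨0, by simp [hW.2.2.2.2.1 i j hij hadj]⟩

namespace Traj

variable {n : ℕ} {W : Matrix (Fin n) (Fin n) ℝ} {x : ℕ → Fin n → ℝ}

theorem succ_sub (hx : Traj W x) (hrow : ∀ i, ∑ j, W i j = 1) (k : ℕ) (i : Fin n) :
    x (k + 1) i - x k i = ∑ j, W i j * ((⌊x k j⌋ : ℝ) - ⌊x k i⌋) := by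
  simp only [hx k i, mul_sub, sum_sub_distrib, ← sum_mul, hrow, one_mul]
  ring

theorem sum_eq (hx : Traj W x) (hcol : ∀ j, ∑ i, W i j = 1) (k : ℕ) :
    ∑ i, x k i = ∑ i, x 0 i := by
  induction k with
  | zero => rfl
  | succ k ih =>
    simp only [hx k, sum_sub_distrib, sum_add_distrib]
    rw [sum_comm]
    simp only [← sum_mul, hcol, one_mul, ih]
    ring

theorem mem_Ico (hx : Traj W x) (hnn : ∀ i j, 0 ≤ W i j) (hrow : ∀ i, ∑ j, W i j = 1)
    {lo hi : ℤ} (h0 : ∀ i, x 0 i ∈ Set.Ico (lo : ℝ) (hi + 1)) (k : ℕ) (i : Fin n) :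
    x k i ∈ Set.Ico (lo : ℝ) (hi + 1) := by
  induction k generalizing i with
  | zero => exact h0 i
  | succ k ih =>
    have hfloor (j : Fin n) : lo ≤ ⌊x k j⌋ ∧ ⌊x k j⌋ ≤ hi := by
      obtain ⟨hlo, hhi⟩ := ih j
      exact ⟨Int.le_floor.mpr hlo,
        Int.lt_add_one_iff.mp (Int.floor_lt.mpr (by exact_mod_cast hhi))⟩
    have hlower : (lo : ℝ) ≤ ∑ j, W i j * ⌊x k j⌋ := calc
      (lo : ℝ) = ∑ j, W i j * lo := by rw [← sum_mul, hrow, one_mul]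
      _ ≤ ∑ j, W i j * ⌊x k j⌋ := by gcongr with j; exacts [hnn i j, (hfloor j).1]
    have hupper : ∑ j, W i j * ⌊x k j⌋ ≤ (hi : ℝ) := calc
      ∑ j, W i j * (⌊x k j⌋ : ℝ) ≤ ∑ j, W i j * hi := by
        gcongr with j; exacts [hnn i j, (hfloor j).2]
      _ = hi := by rw [← sum_mul, hrow, one_mul]
    rw [hx k i, add_sub_assoc, Int.self_sub_floor]
    exact ⟨by linarith [Int.fract_nonneg (x k i)], by linarith [Int.fract_lt_one (x k i)]⟩

theorem mul_sub_mem_bot (hx : Traj W x) (hrow : ∀ i, ∑ j, W i j = 1) {D : ℝ}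
    (hD : ∀ i j, i ≠ j → D * W i j ∈ (⊥ : Subring ℝ)) (k : ℕ) (i : Fin n) :
    D * (x k i - x 0 i) ∈ (⊥ : Subring ℝ) := by
  induction k with
  | zero => simp
  | succ k ih =>
    rw [show x (k + 1) i - x 0 i = (x (k + 1) i - x k i) + (x k i - x 0 i) by ring,
      mul_add, hx.succ_sub hrow, mul_sum]
    refine Subring.add_mem _ (Subring.sum_mem _ fun j _ => ?_) ih
    by_cases hji : j = i
    · simp [hji]
    · rw [← mul_assoc]
      exact Subring.mul_mem _ (hD i j (Ne.symm hji))
        (Subring.sub_mem _ (intCast_mem _ _) (intCast_mem _ _))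

theorem finite_range (hx : Traj W x) (hnn : ∀ i j, 0 ≤ W i j) (hrow : ∀ i, ∑ j, W i j = 1)
    (hrat : ∀ i j, i ≠ j → ∃ r : ℚ, (r : ℝ) = W i j) : (Set.range x).Finite := by
  obtain ⟨D, hD, hDW⟩ := exists_pos_nat_mul_mem_bot univ.offDiag (fun ij => W ij.1 ij.2)
    fun ij hij => hrat ij.1 ij.2 (mem_offDiag.mp hij).2.2
  obtain ⟨a, ha⟩ := (Set.finite_range (x 0)).bddBelow
  obtain ⟨b, hb⟩ := (Set.finite_range (x 0)).bddAbove
  have h0 (i : Fin n) : x 0 i ∈ Set.Ico (⌊a⌋ : ℝ) (⌊b⌋ + 1) :=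
    ⟨(Int.floor_le a).trans (ha ⟨i, rfl⟩), (hb ⟨i, rfl⟩).trans_lt (Int.lt_floor_add_one b)⟩
  refine (Set.Finite.pi fun i => finite_setOf_mem_Icc_mul_sub_mem_bot (Nat.cast_pos.mpr hD)
    (⌊a⌋ : ℝ) (⌊b⌋ + 1) (x 0 i)).subset ?_
  rintro _ ⟨k, rfl⟩ i -
  refine ⟨Set.Ico_subset_Icc_self (hx.mem_Ico hnn hrow h0 k i), hx.mul_sub_mem_bot hrow ?_ k i⟩
  exact fun i j hij => hDW (i, j) (by simp [hij])

theorem mulVec_floor_sum (hx : Traj W x) {K p : ℕ} (hper : x (K + p) = x K) :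
    W *ᵥ (fun i => ∑ r ∈ range p, (⌊x (K + r) i⌋ : ℝ)) =
      fun i => ∑ r ∈ range p, (⌊x (K + r) i⌋ : ℝ) := by
  funext i
  have hstep (r : ℕ) : x (K + (r + 1)) i - x (K + r) i =
      ∑ j, W i j * ⌊x (K + r) j⌋ - ⌊x (K + r) i⌋ := by
    rw [← add_assoc, hx]
    ring
  have htel := sum_range_sub (fun r => x (K + r) i) p
  simp only [hstep, add_zero, hper, sub_self, sum_sub_distrib] at htel
  simp only [Matrix.mulVec, dotProduct, mul_sum]
  rw [sum_comm]
  linarith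

theorem exists_eventually_periodic (hx : Traj W x) (hnn : ∀ i j, 0 ≤ W i j)
    (hrow : ∀ i, ∑ j, W i j = 1) (hrat : ∀ i j, i ≠ j → ∃ r : ℚ, (r : ℝ) = W i j) :
    ∃ K p, 0 < p ∧ ∀ k ≥ K, x (k + p) = x k :=
  exists_eventually_periodic_of_finite_range
    (u := x) (f := fun v i => ∑ j, W i j * (⌊v j⌋ : ℝ) + v i - ⌊v i⌋) (fun k => funext (hx k))
    (hx.finite_range hnn hrow hrat)

theorem sum_period_mean (hx : Traj W x) (hcol : ∀ j, ∑ i, W i j = 1) {K p : ℕ} (hp : 0 < p) :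
    ∑ j, (p : ℝ)⁻¹ * ∑ r ∈ range p, x (K + r) j = ∑ j, x 0 j := by
  rw [← mul_sum, sum_comm]
  simp only [hx.sum_eq hcol, sum_const, card_range, nsmul_eq_mul]
  field_simp

theorem period_mean_mem_Ico {G : SimpleGraph (Fin n)} (hG : G.Connected) (hx : Traj W x)
    (hnn : ∀ i j, 0 ≤ W i j) (hrow : ∀ i, ∑ j, W i j = 1) (hadj : ∀ i j, G.Adj i j → 0 < W i j)
    {K p : ℕ} (hp : 0 < p) (hper : x (K + p) = x K) (i j : Fin n) :
    (p : ℝ)⁻¹ * ∑ r ∈ range p, x (K + r) j ∈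
      Set.Ico ((p : ℝ)⁻¹ * ∑ r ∈ range p, (⌊x (K + r) i⌋ : ℝ))
        ((p : ℝ)⁻¹ * ∑ r ∈ range p, (⌊x (K + r) i⌋ : ℝ) + 1) := by
  rw [← eq_of_mulVec_eq_self_of_connected hG hnn hrow hadj (hx.mulVec_floor_sum hper) j i]
  simpa using mean_mem_Ico_mean_floor (nonempty_range_iff.mpr hp.ne') fun r => x (K + r) j

end Traj

theorem running_averages_converge_general {n : ℕ}
    (G : SimpleGraph (Fin n)) (hG : G.Connected)
    (W : Matrix (Fin n) (Fin n) ℝ) (hW : Assumption1 G W)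
    (x : ℕ → Fin n → ℝ) (hx : Traj W x) :
    ∀ i, ∃ ystar : ℝ,
      Filter.Tendsto
        (fun k : ℕ => (1 / ((k : ℝ) + 1)) * ∑ t ∈ Finset.range (k + 1), x t i)
        Filter.atTop (nhds ystar) ∧
      |ystar - (1 / (n : ℝ)) * ∑ p, x 0 p| ≤ 1 := by
  intro i
  have hrat (a b : Fin n) : a ≠ b → ∃ r : ℚ, (r : ℝ) = W a b := hW.exists_rat_eq_of_ne
  obtain ⟨hsym, hnn, hrow, -, -, hedge⟩ := hW
  have hcol (j : Fin n) : ∑ i, W i j = 1 := by simp only [hsym _ j, hrow]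
  obtain ⟨K, p, hp, hper⟩ := hx.exists_eventually_periodic hnn hrow hrat
  refine ⟨(p : ℝ)⁻¹ * ∑ r ∈ range p, x (K + r) i, ?_, ?_⟩
  · have := (tendsto_cesaro_of_eventually_periodic (u := fun t => x t i) hp
      fun k hk => congrFun (hper k hk) i).comp (tendsto_add_atTop_nat 1)
    simpa [Function.comp_def, one_div] using this
  · have hadj (a b : Fin n) (h : G.Adj a b) : 0 < W a b := (hedge a b h).2.1
    have := abs_sub_mean_lt_one (hx.period_mean_mem_Ico hG hnn hrow hadj hp (hper K le_rfl) i) i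
    rw [hx.sum_period_mean hcol hp, Fintype.card_fin] at this
    rw [one_div]
    exact this.le

/-- Corollary 1: the running time averages `y_i(k) = (1/(k+1)) Σ_{t=0}^k x_i(t)` converge,
to a limit within distance 1 of the initial average. -/
theorem running_averages_converge {n : ℕ} (hn : 1 < n)
    (G : SimpleGraph (Fin n)) (hG : G.Connected)
    (W : Matrix (Fin n) (Fin n) ℝ) (hW : Assumption1 G W)
    (x : ℕ → Fin n → ℝ) (hx : Traj W x) :
    ∀ i, ∃ ystar : ℝ,
      Filter.Tendsto
        (fun k : ℕ => (1 / ((k : ℝ) + 1)) * ∑ t ∈ Finset.range (k + 1), x t i)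
        Filter.atTop (nhds ystar) ∧
      |ystar - (1 / (n : ℝ)) * ∑ p, x 0 p| ≤ 1 :=
  running_averages_converge_general G hG W hW x hx
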